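/- Fix a finite index set ι and for each i ∈ ι a finite nonempty type α i, and consider SPNs over ι as defined inductively (Leaf, Sum with convex weights, Prod over disjoint scopes), with pd defined recursively by pd(Leaf i p) = max_{v : α i} p v, pd(Sum node) = max_j w_j · pd(S_j), pd(Prod node) = Π_j pd(S_j), and with D(S) the product, over all Sum nodes occurring in S, of the number of children of that node. Then for every SPN S, pd(S) · D(S) ≥ max over configurations x : ∀ i, α i of S(x). -/

import Mathlib

open scoped NNReal

/-- Sum-product networks over index set `ι` with variable domains `α i`, indexed by scope. -/
inductive SPN (ι : Type) (α : ι → Type) : Set ι → Type where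
  | leaf (i : ι) (p : α i → ℝ≥0) : SPN ι α {i}
  | sum {sc : Set ι} (t : ℕ) (ht : 1 ≤ t) (child : Fin t → SPN ι α sc)
      (w : Fin t → ℝ≥0) (hw : ∑ j, w j = 1) : SPN ι α sc
  | prod (t : ℕ) (scs : Fin t → Set ι)
      (hd : Pairwise fun j k => Disjoint (scs j) (scs k))
      (child : ∀ j, SPN ι α (scs j)) : SPN ι α (⋃ j, scs j)

/-- The value of an SPN at a configuration. -/
noncomputable def SPN.eval {ι : Type} {α : ι → Type} :
    {sc : Set ι} → SPN ι α sc → (∀ i, α i) → ℝ≥0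
  | _, .leaf i p, x => p (x i)
  | _, .sum _ _ child w _, x => ∑ j, w j * (child j).eval x
  | _, .prod _ _ _ child, x => ∏ j, (child j).eval x

/-- The upward pass of the max-product algorithm. -/
noncomputable def SPN.pd {ι : Type} {α : ι → Type} :
    {sc : Set ι} → SPN ι α sc → ℝ≥0
  | _, .leaf _ p => ⨆ v, p v
  | _, .sum _ _ child w _ => ⨆ j, w j * (child j).pd
  | _, .prod _ _ _ child => ∏ j, (child j).pd

/-- The product over all sum nodes of the number of their children. -/
def SPN.D {ι : Type} {α : ι → Type} :
    {sc : Set ι} → SPN ι α sc → ℕ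
  | _, .leaf _ _ => 1
  | _, .sum t _ child _ _ => t * ∏ j, (child j).D
  | _, .prod _ _ _ child => ∏ j, (child j).D

/-!
Induction on the network, bounding `S.eval x` for each fixed `x`. Products are monotone, so
product nodes are immediate. At a sum node each of the `t` terms `w j * S_j(x)` is at most
`(max_k w k * pd S_k) * ∏ k, D S_k`, and adding `t` such bounds is what the factor `t` in `D` pays for.
-/

namespace SPN

variable {ι : Type} {α : ι → Type}

theorem one_le_D {sc : Set ι} (S : SPN ι α sc) : 1 ≤ S.D := by
  induction S with
  | leaf => exact le_rfl
  | sum _ ht _ _ _ ih => exact Nat.mul_le_mul ht (Finset.one_le_prod' fun j _ => ih j)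
  | prod _ _ _ _ ih => exact Finset.one_le_prod' fun j _ => ih j

theorem D_le_prod_D {t : ℕ} {scs : Fin t → Set ι} (child : ∀ j, SPN ι α (scs j)) (j : Fin t) :
    (child j).D ≤ ∏ k, (child k).D :=
  Finset.single_le_prod' (fun k _ => (child k).one_le_D) (Finset.mem_univ j)

theorem eval_sum_le {sc : Set ι} {t : ℕ} (child : Fin t → SPN ι α sc) (w : Fin t → ℝ≥0)
    (x : ∀ i, α i) (ih : ∀ j, (child j).eval x ≤ (child j).pd * ((child j).D : ℝ≥0)) :
    ∑ j, w j * (child j).eval x ≤ (⨆ k, w k * (child k).pd) * ((t * ∏ k, (child k).D : ℕ) : ℝ≥0) := by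
  have hterm : ∀ j ∈ Finset.univ, w j * (child j).eval x
      ≤ (⨆ k, w k * (child k).pd) * ((∏ k, (child k).D : ℕ) : ℝ≥0) := fun j _ =>
    calc w j * (child j).eval x
        ≤ w j * ((child j).pd * (child j).D) := mul_le_mul_right (ih j) _
      _ = (w j * (child j).pd) * (child j).D := (mul_assoc _ _ _).symm
      _ ≤ (⨆ k, w k * (child k).pd) * ((∏ k, (child k).D : ℕ) : ℝ≥0) :=
          mul_le_mul' (Finite.le_ciSup (fun k => w k * (child k).pd) j)
            (by exact_mod_cast D_le_prod_D child j)
  calc ∑ j, w j * (child j).eval x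
      ≤ Finset.univ.card • ((⨆ k, w k * (child k).pd) * ((∏ k, (child k).D : ℕ) : ℝ≥0)) :=
        Finset.sum_le_card_nsmul _ _ _ hterm
    _ = (⨆ k, w k * (child k).pd) * ((t * ∏ k, (child k).D : ℕ) : ℝ≥0) := by
        rw [Finset.card_univ, Fintype.card_fin, nsmul_eq_mul, Nat.cast_mul]
        ring

theorem eval_le_pd_mul_D [∀ i, Finite (α i)] {sc : Set ι} (S : SPN ι α sc) (x : ∀ i, α i) :
    S.eval x ≤ S.pd * (S.D : ℝ≥0) := by
  induction S with
  | leaf i p =>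
      simpa only [eval, pd, D, Nat.cast_one, mul_one] using Finite.le_ciSup p (x i)
  | sum _ _ child w _ ih => exact eval_sum_le child w x fun j => ih j
  | prod _ _ _ _ ih =>
      simp only [eval, pd, D, Nat.cast_prod, ← Finset.prod_mul_distrib]
      exact Finset.prod_le_prod' fun j _ => ih j

end SPN

theorem stmt12_general {ι : Type} {α : ι → Type}
    [∀ i, Fintype (α i)]
    {sc : Set ι} (S : SPN ι α sc) :
    (⨆ x : ∀ i, α i, S.eval x) ≤ S.pd * (S.D : ℝ≥0) :=
  ciSup_le' fun x => S.eval_le_pd_mul_D x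

/-- For every SPN `S`, `pd(S) · D(S) ≥ max_x S(x)`. -/
theorem stmt12 {ι : Type} [Fintype ι] [DecidableEq ι] {α : ι → Type}
    [∀ i, Fintype (α i)] [∀ i, Nonempty (α i)]
    {sc : Set ι} (S : SPN ι α sc) :
    (⨆ x : ∀ i, α i, S.eval x) ≤ S.pd * (S.D : ℝ≥0) :=
  stmt12_general S
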